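/- Let (N₁,N₂,N₃) be a commuting triple of bounded linear operators on a complex Hilbert space H. Then the following are equivalent: (i) N₂ and N₃ are normal, N₃ is unitary, N₂ = N₂*N₃, ‖N₂‖ ≤ 2, and N₁*N₁ = I − ¼N₂*N₂ and N₁N₁* = I − ¼N₂N₂*; (ii) there exists a unitary operator U on H ⊕ H given by a 2×2 block matrix U = [U_{ij}] whose entries U₁₁, U₁₂, U₂₁, U₂₂ are commuting normal operators on H with U₁₁ = U₂₂, such that N₁ = U₂₁, N₂ = U₁₁ + U₂₂ and N₃ = U₁₁U₂₂ − U₁₂U₂₁. -/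

import Mathlib

/-!
Put `A = N₂ / 2`, `B = -N₁* N₃`, `C = N₁` and `M = [[A, B], [C, A]]`. When the entries of `M`
commute, `M` times its adjugate `[[A, -B], [-C, A]]` (in either order) is the diagonal operator
with entry `det M = A² - BC`.

(i) ⇒ (ii): By Fuglede's theorem the normal operators `N₁, N₂, N₃` and their adjoints all commute,
and the relations in (i) give `det M = N₃` and `M* = diag(N₃*) · adj M`; since `N₃` is unitary,
so is `M`.

(ii) ⇒ (i), with `M = U`: conjugating by `diag(1, -1)` shows that the adjugate of `M` is unitary,
hence so is `det M = N₃`. The remaining identities are the entries of `M* M = M M* = 1`, and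
`‖A‖ ≤ 1` because `A` is a compression of `M`.
-/

theorem Commute.isStarNormal_mul {R : Type*} [Monoid R] [StarMul R] {a b : R}
    (hab : Commute a b) (hab' : Commute a (star b)) [ha : IsStarNormal a] [hb : IsStarNormal b] :
    IsStarNormal (a * b) := by
  have h₁ : Commute (star a * a) b := (commute_star_comm.2 hab').mul_left hab
  have h₂ : Commute a (b * star b) := hab.mul_right hab'
  rw [isStarNormal_iff, commute_iff_eq, star_mul]
  calc star b * star a * (a * b) = star b * b * (star a * a) := by
        rw [mul_assoc, ← mul_assoc _ a, h₁.eq, mul_assoc]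
    _ = b * star b * (a * star a) := by rw [hb.star_comm_self.eq, ha.star_comm_self.eq]
    _ = a * b * (star b * star a) := by
        rw [← mul_assoc, ← h₂.eq, mul_assoc a, mul_assoc a, mul_assoc]

open ContinuousLinearMap

noncomputable section

variable {H : Type*} [NormedAddCommGroup H] [InnerProductSpace ℂ H] [CompleteSpace H]

/-- The 2×2 block operator [[U₁₁, U₁₂],[U₂₁, U₂₂]] acting on the Hilbert space direct sum
H ⊕ H (realized as `WithLp 2 (H × H)`): (x,y) ↦ (U₁₁x + U₁₂y, U₂₁x + U₂₂y). -/
noncomputable def blockOp (U11 U12 U21 U22 : H →L[ℂ] H) :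
    WithLp 2 (H × H) →L[ℂ] WithLp 2 (H × H) :=
  (((WithLp.prodContinuousLinearEquiv 2 ℂ H H).symm :
      (H × H) →L[ℂ] WithLp 2 (H × H)).comp
    ((((U11.comp (fst ℂ H H)) + (U12.comp (snd ℂ H H))).prod
        ((U21.comp (fst ℂ H H)) + (U22.comp (snd ℂ H H)))))).comp
    ((WithLp.prodContinuousLinearEquiv 2 ℂ H H : WithLp 2 (H × H) →L[ℂ] H × H))

section BlockOp

omit [CompleteSpace H]

@[simp]
lemma ofLp_blockOp_apply (A B C D : H →L[ℂ] H) (x : WithLp 2 (H × H)) :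
    (blockOp A B C D x).ofLp = (A x.ofLp.1 + B x.ofLp.2, C x.ofLp.1 + D x.ofLp.2) := rfl

lemma blockOp_mul (A B C D A' B' C' D' : H →L[ℂ] H) :
    blockOp A B C D * blockOp A' B' C' D' =
      blockOp (A * A' + B * C') (A * B' + B * D') (C * A' + D * C') (C * B' + D * D') := by
  ext x : 1
  apply WithLp.ofLp_injective
  simp only [mul_apply_eq_comp, ofLp_blockOp_apply, add_apply, map_add]
  congr 1 <;> abel

lemma blockOp_one : blockOp (1 : H →L[ℂ] H) 0 0 1 = 1 := by
  ext x : 1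
  apply WithLp.ofLp_injective
  simp only [ofLp_blockOp_apply, zero_apply, add_zero, zero_add]
  rfl

lemma blockOp_inj {A B C D A' B' C' D' : H →L[ℂ] H} :
    blockOp A B C D = blockOp A' B' C' D' ↔ A = A' ∧ B = B' ∧ C = C' ∧ D = D' := by
  refine ⟨fun h => ⟨?_, ?_, ?_, ?_⟩, by rintro ⟨rfl, rfl, rfl, rfl⟩; rfl⟩ <;> ext x
  · simpa using congr(($h (WithLp.toLp 2 (x, 0))).ofLp.1)
  · simpa using congr(($h (WithLp.toLp 2 (0, x))).ofLp.1)
  · simpa using congr(($h (WithLp.toLp 2 (x, 0))).ofLp.2)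
  · simpa using congr(($h (WithLp.toLp 2 (0, x))).ofLp.2)

end BlockOp

lemma star_blockOp (A B C D : H →L[ℂ] H) :
    star (blockOp A B C D) = blockOp (star A) (star C) (star B) (star D) := by
  rw [star_eq_adjoint, eq_comm, eq_adjoint_iff]
  intro x y
  simp only [WithLp.prod_inner_apply, ofLp_blockOp_apply, inner_add_left,
    inner_add_right, star_eq_adjoint, adjoint_inner_left]
  ring

lemma norm_le_one_of_blockOp_mem_unitary {A B C D : H →L[ℂ] H}
    (hU : blockOp A B C D ∈ unitary (WithLp 2 (H × H) →L[ℂ] WithLp 2 (H × H))) : ‖A‖ ≤ 1 := by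
  refine opNorm_le_bound _ zero_le_one fun x => ?_
  calc ‖A x‖ = ‖(blockOp A B C D (WithLp.toLp 2 (x, 0))).fst‖ := by simp [WithLp.fst]
    _ ≤ ‖blockOp A B C D (WithLp.toLp 2 (x, 0))‖ := WithLp.norm_fst_le _ _
    _ = 1 * ‖x‖ := by rw [norm_map_of_mem_unitary hU, WithLp.norm_toLp_fst, one_mul]

lemma blockOp_mem_unitary_iff {A B C D : H →L[ℂ] H} :
    blockOp A B C D ∈ unitary (WithLp 2 (H × H) →L[ℂ] WithLp 2 (H × H)) ↔
      (star A * A + star C * C = 1 ∧ star A * B + star C * D = 0 ∧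
        star B * A + star D * C = 0 ∧ star B * B + star D * D = 1) ∧
      (A * star A + B * star B = 1 ∧ A * star C + B * star D = 0 ∧
        C * star A + D * star B = 0 ∧ C * star C + D * star D = 1) := by
  simp only [Unitary.mem_iff, star_blockOp, blockOp_mul, ← blockOp_one, blockOp_inj]

lemma blockOp_diag_mem_unitary_iff {D : H →L[ℂ] H} :
    blockOp D 0 0 D ∈ unitary (WithLp 2 (H × H) →L[ℂ] WithLp 2 (H × H)) ↔
      D ∈ unitary (H →L[ℂ] H) := by
  rw [blockOp_mem_unitary_iff]
  simp [Unitary.mem_iff]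

lemma blockOp_neg_offDiag_mem_unitary {A B C D : H →L[ℂ] H}
    (hU : blockOp A B C D ∈ unitary (WithLp 2 (H × H) →L[ℂ] WithLp 2 (H × H))) :
    blockOp A (-B) (-C) D ∈ unitary (WithLp 2 (H × H) →L[ℂ] WithLp 2 (H × H)) := by
  have hJ : blockOp (1 : H →L[ℂ] H) 0 0 (-1) ∈
      unitary (WithLp 2 (H × H) →L[ℂ] WithLp 2 (H × H)) := by
    simp [blockOp_mem_unitary_iff]
  have hconj : blockOp A (-B) (-C) D =
      blockOp 1 0 0 (-1) * blockOp A B C D * blockOp 1 0 0 (-1) := by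
    simp [blockOp_mul]
  rw [hconj]
  exact mul_mem (mul_mem hJ hU) hJ

section Adjugate

variable {A B C : H →L[ℂ] H} (hAB : Commute A B) (hAC : Commute A C) (hBC : Commute B C)
include hAB hAC hBC

omit [CompleteSpace H] in
lemma blockOp_mul_adjugate :
    blockOp A B C A * blockOp A (-B) (-C) A = blockOp (A * A - B * C) 0 0 (A * A - B * C) := by
  simp only [blockOp_mul, blockOp_inj, mul_neg, hAB.eq, hAC.eq, hBC.eq]
  refine ⟨?_, ?_, ?_, ?_⟩ <;> abel

omit [CompleteSpace H] in
lemma adjugate_mul_blockOp :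
    blockOp A (-B) (-C) A * blockOp A B C A = blockOp (A * A - B * C) 0 0 (A * A - B * C) := by
  simpa using blockOp_mul_adjugate hAB.neg_right hAC.neg_right hBC.neg_left.neg_right

lemma mul_self_sub_mem_unitary_of_blockOp_mem_unitary
    (hU : blockOp A B C A ∈ unitary (WithLp 2 (H × H) →L[ℂ] WithLp 2 (H × H))) :
    A * A - B * C ∈ unitary (H →L[ℂ] H) := by
  rw [← blockOp_diag_mem_unitary_iff, ← blockOp_mul_adjugate hAB hAC hBC]
  exact mul_mem hU (blockOp_neg_offDiag_mem_unitary hU)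

lemma blockOp_mem_unitary_of_star_eq {u : H →L[ℂ] H} (hu : u ∈ unitary (H →L[ℂ] H))
    (hdet : A * A - B * C = u) (huA : Commute (star u) A) (huB : Commute (star u) B)
    (huC : Commute (star u) C) (hA : star A = star u * A) (hB : star B = -(star u * C))
    (hC : star C = -(star u * B)) :
    blockOp A B C A ∈ unitary (WithLp 2 (H × H) →L[ℂ] WithLp 2 (H × H)) := by
  have hstar : star (blockOp A B C A) = blockOp (star u) 0 0 (star u) * blockOp A (-B) (-C) A := by
    simp [star_blockOp, blockOp_mul, hA, hB, hC]
  have hcomm : blockOp (star u) 0 0 (star u) * blockOp A B C A =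
      blockOp A B C A * blockOp (star u) 0 0 (star u) := by
    simp [blockOp_mul, huA.eq, huB.eq, huC.eq]
  have hdiag : blockOp (star u) 0 0 (star u) * blockOp u 0 0 u = 1 := by
    simp [blockOp_mul, Unitary.star_mul_self_of_mem hu, blockOp_one]
  rw [Unitary.mem_iff, hstar, mul_assoc, adjugate_mul_blockOp hAB hAC hBC, ← mul_assoc, ← hcomm,
    mul_assoc, blockOp_mul_adjugate hAB hAC hBC, hdet]
  exact ⟨hdiag, hdiag⟩

end Adjugate

lemma star_mul_mul_self_sub_of_blockOp_mem_unitary {A B C : H →L[ℂ] H} (hAC : Commute A C)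
    (hU : blockOp A B C A ∈ unitary (WithLp 2 (H × H) →L[ℂ] WithLp 2 (H × H))) :
    star A * (A * A - B * C) = A := by
  obtain ⟨⟨h₁, h₂, -, -⟩, -⟩ := blockOp_mem_unitary_iff.1 hU
  calc star A * (A * A - B * C) = star A * A * A - star A * B * C := by noncomm_ring
    _ = star A * A * A + star C * (A * C) := by
        rw [eq_neg_of_add_eq_zero_left h₂]; noncomm_ring
    _ = (star A * A + star C * C) * A := by rw [hAC.eq]; noncomm_ring
    _ = A := by rw [h₁, one_mul]

theorem exists_blockOp_mem_unitary_of_pUnitary {N₁ N₂ N₃ : H →L[ℂ] H}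
    (h₁₂ : Commute N₁ N₂) (h₁₃ : Commute N₁ N₃) (h₂₃ : Commute N₂ N₃)
    (hN₂ : IsStarNormal N₂) (hN₃ : N₃ ∈ unitary (H →L[ℂ] H)) (hN₂N₃ : N₂ = star N₂ * N₃)
    (hN₁ : star N₁ * N₁ = 1 - (1 / 4 : ℂ) • (star N₂ * N₂))
    (hN₁' : N₁ * star N₁ = 1 - (1 / 4 : ℂ) • (N₂ * star N₂)) :
    ∃ A B : H →L[ℂ] H, Commute A B ∧ Commute A N₁ ∧ Commute B N₁ ∧
      IsStarNormal A ∧ IsStarNormal B ∧ IsStarNormal N₁ ∧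
      blockOp A B N₁ A ∈ unitary (WithLp 2 (H × H) →L[ℂ] WithLp 2 (H × H)) ∧
      N₂ = A + A ∧ N₃ = A * A - B * N₁ := by
  have hN₁n : IsStarNormal N₁ := ⟨by rw [commute_iff_eq, hN₁, hN₁', hN₂.star_comm_self.eq]⟩
  have hN₃n : IsStarNormal N₃ := isStarNormal_of_mem_unitary hN₃
  have h₁₃' : Commute (star N₁) (star N₃) := h₁₃.star_star
  have hAB : Commute ((1 / 2 : ℂ) • N₂) (-(star N₁ * N₃)) :=
    (((hN₁n.commute_star_right h₁₂.symm).mul_right h₂₃).neg_right).smul_left _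
  have hAC : Commute ((1 / 2 : ℂ) • N₂) N₁ := h₁₂.symm.smul_left _
  have hBC : Commute (-(star N₁ * N₃)) N₁ := (hN₁n.star_comm_self.mul_left h₁₃.symm).neg_left
  have hdet : (1 / 2 : ℂ) • N₂ * ((1 / 2 : ℂ) • N₂) - -(star N₁ * N₃) * N₁ = N₃ := by
    have h : star N₁ * N₃ * N₁ = N₃ - (1 / 4 : ℂ) • (N₂ * N₂) := by
      rw [mul_assoc, ← h₁₃.eq, ← mul_assoc, hN₁, sub_mul, one_mul, smul_mul_assoc, mul_assoc,
        h₂₃.eq, ← mul_assoc, ← hN₂N₃]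
    rw [neg_mul, sub_neg_eq_add, h, smul_mul_smul_comm]
    module
  refine ⟨(1 / 2 : ℂ) • N₂, -(star N₁ * N₃), hAB, hAC, hBC, inferInstance, ?_, hN₁n, ?_,
    by module, hdet.symm⟩
  · have : IsStarNormal (star N₁ * N₃) :=
      (hN₁n.commute_star_left h₁₃).isStarNormal_mul h₁₃'
    infer_instance
  refine blockOp_mem_unitary_of_star_eq hAB hAC hBC hN₃ hdet
    ((hN₃n.commute_star_left h₂₃.symm).smul_right _)
    (h₁₃'.symm.mul_right hN₃n.star_comm_self).neg_right
    (hN₃n.commute_star_left h₁₃.symm) ?_ (by simp) ?_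
  · have h : star N₂ = star N₃ * N₂ := by
      conv_lhs => rw [hN₂N₃]
      rw [star_mul, star_star]
    simp [h]
  · rw [mul_neg, neg_neg, ← mul_assoc, ← h₁₃'.eq, mul_assoc, Unitary.star_mul_self_of_mem hN₃,
      mul_one]

/-- For a commuting triple (N₁,N₂,N₃) of bounded operators on a complex Hilbert space H,
the following are equivalent:
(i) N₂ and N₃ are normal, N₃ is unitary, N₂ = N₂*N₃, ‖N₂‖ ≤ 2,
    N₁*N₁ = I − ¼N₂*N₂ and N₁N₁* = I − ¼N₂N₂*;
(ii) there is a unitary 2×2 block operator U = [Uᵢⱼ] on H ⊕ H with commuting normal entries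
     and U₁₁ = U₂₂, such that N₁ = U₂₁, N₂ = U₁₁ + U₂₂ and N₃ = U₁₁U₂₂ − U₁₂U₂₁. -/
theorem stmt13 (N₁ N₂ N₃ : H →L[ℂ] H)
    (h₁₂ : Commute N₁ N₂) (h₁₃ : Commute N₁ N₃) (h₂₃ : Commute N₂ N₃) :
    (IsStarNormal N₂ ∧ IsStarNormal N₃ ∧
      N₃ ∈ unitary (H →L[ℂ] H) ∧ N₂ = adjoint N₂ * N₃ ∧ ‖N₂‖ ≤ 2 ∧
      adjoint N₁ * N₁ = 1 - (1 / 4 : ℂ) • (adjoint N₂ * N₂) ∧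
      N₁ * adjoint N₁ = 1 - (1 / 4 : ℂ) • (N₂ * adjoint N₂)) ↔
    (∃ U11 U12 U21 U22 : H →L[ℂ] H,
      Commute U11 U12 ∧ Commute U11 U21 ∧ Commute U11 U22 ∧
      Commute U12 U21 ∧ Commute U12 U22 ∧ Commute U21 U22 ∧
      IsStarNormal U11 ∧ IsStarNormal U12 ∧ IsStarNormal U21 ∧ IsStarNormal U22 ∧
      U11 = U22 ∧
      blockOp U11 U12 U21 U22 ∈
        unitary (WithLp 2 (H × H) →L[ℂ] WithLp 2 (H × H)) ∧
      N₁ = U21 ∧ N₂ = U11 + U22 ∧ N₃ = U11 * U22 - U12 * U21) := by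
  simp only [← star_eq_adjoint]
  constructor
  · rintro ⟨hN₂, -, hN₃, hN₂N₃, -, hN₁, hN₁'⟩
    obtain ⟨A, B, hAB, hAC, hBC, hA, hB, hC, hU, rfl, rfl⟩ :=
      exists_blockOp_mem_unitary_of_pUnitary h₁₂ h₁₃ h₂₃ hN₂ hN₃ hN₂N₃ hN₁ hN₁'
    exact ⟨A, B, N₁, A, hAB, hAC, .refl A, hBC, hAB.symm, hAC.symm, hA, hB, hC, hA, rfl, hU,
      rfl, rfl, rfl⟩
  · rintro ⟨A, B, C, D, hAB, hAC, -, hBC, -, -, hA, -, -, -, rfl, hU, rfl, rfl, rfl⟩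
    obtain ⟨⟨hcol₁, -, -, -⟩, -, -, -, hrow₂⟩ := blockOp_mem_unitary_iff.1 hU
    have hdet := mul_self_sub_mem_unitary_of_blockOp_mem_unitary hAB hAC hBC hU
    have hstar : star (A + A) = (2 : ℂ) • star A := by rw [star_add, two_smul]
    refine ⟨hA.star_comm_self.symm.isStarNormal_add, isStarNormal_of_mem_unitary hdet, hdet, ?_,
      ?_, ?_, ?_⟩
    · rw [star_add, add_mul, star_mul_mul_self_sub_of_blockOp_mem_unitary hAC hU]
    · linarith [norm_add_le A A, norm_le_one_of_blockOp_mem_unitary hU]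
    · rw [eq_sub_of_add_eq' hcol₁, hstar, ← two_smul ℂ A, smul_mul_smul_comm]
      module
    · rw [eq_sub_of_add_eq hrow₂, hstar, ← two_smul ℂ A, smul_mul_smul_comm]
      module
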